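/- arXiv:1211.6310 — 4 statements merged into one kernel-verified Lean document; each statement's English description precedes it below -/
import Mathlib

section
/- Consider the Z/2-grading on the infinite-dimensional Grassmann algebra E induced by declaring deg(e_i) = 1 for i = 1,…,k and deg(e_i) = 0 for i > k. Then the product of any k+1 homogeneous elements of degree 1 is zero; that is, z_1 z_2 ⋯ z_{k+1} is a graded polynomial identity of E with this grading. -/
open ExteriorAlgebra

/-- The generator `e_i` of the infinite-dimensional Grassmann algebra. -/
noncomputable def grassGen (F : Type*) [Field F] (i : ℕ) : ExteriorAlgebra F (ℕ →₀ F) :=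
  ExteriorAlgebra.ι F (Finsupp.single i 1)

/-- The homogeneous component of degree `g ∈ ℤ/2` of the Grassmann algebra for the
grading `deg(·)_{k*}` (i.e. `deg(e_i) = 1` for the first `k` generators and `0`
otherwise): it is spanned by the products of generators in which the number of factors
among the first `k` generators is congruent to `g` modulo `2`. -/
noncomputable def grassCompKStar (F : Type*) [Field F] (k : ℕ) (g : ZMod 2) :
    Submodule F (ExteriorAlgebra F (ℕ →₀ F)) :=
  Submodule.span F
    {x | ∃ l : List ℕ, ((l.countP fun i => decide (i < k)) : ZMod 2) = g ∧
      x = (l.map (grassGen F)).prod}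

/-! A homogeneous element of degree `1` is a combination of monomials with an odd, hence
positive, number of factors among the first `k` generators, so a product of `k + 1` of them
is a combination of monomials with at least `k + 1` such factors. By pigeonhole each of
these monomials repeats a generator, hence vanishes. -/

namespace ExteriorAlgebra

variable {R M : Type*} [CommRing R] [AddCommGroup M] [Module R M]

theorem list_prod_map_ι_eq_zero_of_not_nodup {l : List M} (hl : ¬ l.Nodup) :
    (l.map (ι R)).prod = 0 := by
  have hv : ¬ Function.Injective l.get := fun h => hl (List.nodup_iff_injective_get.mpr h)
  rw [← ιMulti_eq_zero_of_not_inj (R := R) hv, ιMulti_apply]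
  exact congrArg List.prod (List.ofFn_getElem_eq_map l (ι R)).symm

end ExteriorAlgebra

theorem List.Nodup.countP_lt_le {l : List ℕ} (hl : l.Nodup) (k : ℕ) :
    (l.countP fun i => decide (i < k)) ≤ k := by
  have hsub : l.filter (fun i => decide (i < k)) ⊆ List.range k := by
    intro x hx
    simpa using (List.mem_filter.mp hx).2
  simpa [List.countP_eq_length_filter] using ((hl.filter _).subperm hsub).length_le

theorem grassGen_list_prod_eq_zero_of_not_nodup (F : Type*) [Field F] {l : List ℕ}
    (hl : ¬ l.Nodup) : (l.map (grassGen F)).prod = 0 := by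
  rw [show grassGen F = ι F ∘ fun i => Finsupp.single i 1 from rfl, ← List.map_map]
  exact ExteriorAlgebra.list_prod_map_ι_eq_zero_of_not_nodup fun h => hl (h.of_map _)

noncomputable def grassMonomialsAtLeast (F : Type*) [Field F] (k n : ℕ) :
    Submodule F (ExteriorAlgebra F (ℕ →₀ F)) :=
  Submodule.span F
    {x | ∃ l : List ℕ, n ≤ (l.countP fun i => decide (i < k)) ∧
      x = (l.map (grassGen F)).prod}

section grassMonomialsAtLeast

variable (F : Type*) [Field F] (k : ℕ)

theorem one_mem_grassMonomialsAtLeast_zero : 1 ∈ grassMonomialsAtLeast F k 0 :=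
  Submodule.subset_span ⟨[], le_rfl, rfl⟩

theorem grassCompKStar_one_le : grassCompKStar F k 1 ≤ grassMonomialsAtLeast F k 1 := by
  refine Submodule.span_mono ?_
  rintro _ ⟨l, hl, rfl⟩
  refine ⟨l, Nat.one_le_iff_ne_zero.mpr fun h0 => ?_, rfl⟩
  simp [h0] at hl

theorem grassMonomialsAtLeast_mul_le (a b : ℕ) :
    grassMonomialsAtLeast F k a * grassMonomialsAtLeast F k b ≤
      grassMonomialsAtLeast F k (a + b) := by
  rw [grassMonomialsAtLeast, grassMonomialsAtLeast, Submodule.span_mul_span]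
  refine Submodule.span_mono ?_
  rintro _ ⟨_, ⟨l₁, hl₁, rfl⟩, _, ⟨l₂, hl₂, rfl⟩, rfl⟩
  refine ⟨l₁ ++ l₂, ?_, by rw [List.map_append, List.prod_append]⟩
  rw [List.countP_append]
  omega

theorem list_prod_ofFn_mem_grassMonomialsAtLeast {n : ℕ}
    {z : Fin n → ExteriorAlgebra F (ℕ →₀ F)} (hz : ∀ t, z t ∈ grassMonomialsAtLeast F k 1) :
    (List.ofFn z).prod ∈ grassMonomialsAtLeast F k n := by
  induction n with
  | zero => simpa using one_mem_grassMonomialsAtLeast_zero F k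
  | succ n ih =>
    have hmem := grassMonomialsAtLeast_mul_le F k 1 n
      (Submodule.mul_mem_mul (hz 0) (ih fun t => hz t.succ))
    rw [List.ofFn_succ, List.prod_cons]
    rwa [add_comm] at hmem

theorem grassMonomialsAtLeast_eq_bot : grassMonomialsAtLeast F k (k + 1) = ⊥ := by
  rw [eq_bot_iff, grassMonomialsAtLeast, Submodule.span_le]
  rintro _ ⟨l, hl, rfl⟩
  exact grassGen_list_prod_eq_zero_of_not_nodup F fun hnd =>
    Nat.not_succ_le_self k (hl.trans (hnd.countP_lt_le k))

end grassMonomialsAtLeast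

theorem grassmann_kstar_monomial_identity_general (F : Type*) [Field F] (k : ℕ)
    (z : Fin (k + 1) → ExteriorAlgebra F (ℕ →₀ F))
    (hz : ∀ t, z t ∈ grassCompKStar F k 1) :
    (List.ofFn z).prod = 0 := by
  have hmem :=
    list_prod_ofFn_mem_grassMonomialsAtLeast F k fun t => grassCompKStar_one_le F k (hz t)
  rwa [grassMonomialsAtLeast_eq_bot, Submodule.mem_bot] at hmem

/-- With the `ℤ/2`-grading on the Grassmann algebra `E` induced by `deg(e_i) = 1` for
`i = 1, …, k` and `deg(e_i) = 0` for `i > k`, the product of any `k + 1` homogeneous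
elements of degree `1` is zero: `z₁ z₂ ⋯ z_{k+1}` is a graded identity of `E`. -/
theorem grassmann_kstar_monomial_identity (F : Type*) [Field F] [CharZero F] (k : ℕ)
    (z : Fin (k + 1) → ExteriorAlgebra F (ℕ →₀ F))
    (hz : ∀ t, z t ∈ grassCompKStar F k 1) :
    (List.ofFn z).prod = 0 :=
  grassmann_kstar_monomial_identity_general F k z hz
end

section
/- With the Z/2-grading on the Grassmann algebra E induced by deg(e_i) = 1 for odd i and deg(e_i) = 0 for even i (the grading deg(·)_∞), E satisfies no graded monomial identity: for every sequence of degrees g_1,…,g_n ∈ Z/2 there exist homogeneous elements a_1,…,a_n of E of those degrees with a_1 a_2 ⋯ a_n ≠ 0. -/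
/-- The homogeneous component of degree `g ∈ ℤ/2` of the Grassmann algebra for the
grading `deg(·)_∞`, in which `deg(e_i) = 1` for odd `i` (in the 1-based indexing of the
generators, i.e. even `i` in our 0-based indexing) and `deg(e_i) = 0` otherwise: it is
spanned by the products of generators in which the number of factors of degree `1` is
congruent to `g` modulo `2`. -/
noncomputable def grassCompInf (F : Type*) [Field F] (g : ZMod 2) :
    Submodule F (ExteriorAlgebra F (ℕ →₀ F)) :=
  Submodule.span F
    {x | ∃ l : List ℕ, ((l.countP fun i => decide (i % 2 = 0)) : ZMod 2) = g ∧
      x = (l.map (grassGen F)).prod}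

/-!
Take `a_t = e_{i_t}` with `i_t = 2t + g_t + 1`: the index `i_t` has the parity that puts the
generator in degree `g_t`, and the indices are pairwise distinct. A product of distinct
generators is nonzero: the determinant of their coordinates is an alternating form, so it
factors through the exterior algebra, and it takes the value `1` on that product.
-/

namespace ExteriorAlgebra

variable {R M ι : Type*} [CommRing R] [AddCommGroup M] [Module R M]

theorem ιMulti_ne_zero_of_det_ne_zero {n : ℕ} (v : Fin n → M) (f : Fin n → Module.Dual R M)
    (hdet : (Matrix.of fun i j => f j (v i)).det ≠ 0) : ιMulti R n v ≠ 0 := by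
  let D : M [⋀^Fin n]→ₗ[R] R := Matrix.detRowAlternating.compLinearMap (LinearMap.pi f)
  intro h
  have hD := congrArg (liftAlternating (Pi.single (M := fun i => M [⋀^Fin i]→ₗ[R] R) n D)) h
  rw [liftAlternating_apply_ιMulti, Pi.single_eq_same, map_zero] at hD
  exact hdet hD

theorem ιMulti_single_ne_zero [Nontrivial R] {n : ℕ} {idx : Fin n → ι}
    (hidx : Function.Injective idx) :
    ιMulti R n (fun t => Finsupp.single (idx t) (1 : R)) ≠ 0 := by
  classical
  refine ιMulti_ne_zero_of_det_ne_zero _ (fun j => Finsupp.lapply (M := R) (idx j)) ?_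
  have hone : (Matrix.of fun i j => Finsupp.single (idx i) (1 : R) (idx j)) = 1 := by
    ext i j
    simp [Finsupp.single_apply, hidx.eq_iff, Matrix.one_apply]
  simp [hone]

end ExteriorAlgebra

section

variable {F : Type*} [Field F]

theorem grassGen_mem_grassCompInf (i : ℕ) :
    grassGen F i ∈ grassCompInf F ((i + 1 : ℕ) : ZMod 2) := by
  refine Submodule.subset_span ⟨[i], ?_, by simp⟩
  rcases Nat.even_or_odd' i with ⟨k, rfl | rfl⟩
  · simp [CharTwo.two_eq_zero]
  · simp [CharTwo.two_eq_zero, add_assoc, CharTwo.add_self_eq_zero]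

theorem prod_ofFn_grassGen_ne_zero {n : ℕ} {idx : Fin n → ℕ} (hidx : Function.Injective idx) :
    (List.ofFn fun t => grassGen F (idx t)).prod ≠ 0 :=
  ExteriorAlgebra.ιMulti_single_ne_zero hidx

end

theorem grassmann_inf_no_monomial_identity_general (F : Type*) [Field F]
    (n : ℕ) (g : Fin n → ZMod 2) :
    ∃ a : Fin n → ExteriorAlgebra F (ℕ →₀ F),
      (∀ t, a t ∈ grassCompInf F (g t)) ∧ (List.ofFn a).prod ≠ 0 := by
  let idx : Fin n → ℕ := fun t => 2 * t + (g t).val + 1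
  have hidx : Function.Injective idx := fun s t hst => by
    have := ZMod.val_lt (g s); have := ZMod.val_lt (g t)
    exact Fin.ext (by simp only [idx] at hst; omega)
  refine ⟨fun t => grassGen F (idx t), fun t => ?_, prod_ofFn_grassGen_ne_zero hidx⟩
  convert grassGen_mem_grassCompInf (idx t)
  simp [idx, CharTwo.two_eq_zero, add_assoc]

/-- With the grading `deg(·)_∞`, the Grassmann algebra satisfies no graded monomial
identity: for every sequence of degrees `g₁, …, gₙ ∈ ℤ/2` there are homogeneous
elements `a₁, …, aₙ` of those degrees with `a₁ a₂ ⋯ aₙ ≠ 0`. -/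
theorem grassmann_inf_no_monomial_identity (F : Type*) [Field F] [CharZero F]
    (n : ℕ) (g : Fin n → ZMod 2) :
    ∃ a : Fin n → ExteriorAlgebra F (ℕ →₀ F),
      (∀ t, a t ∈ grassCompInf F (g t)) ∧ (List.ofFn a).prod ≠ 0 :=
  grassmann_inf_no_monomial_identity_general F n g
end

section
/- Let G be a group, A a G-graded algebra satisfying a graded polynomial identity, and d_1,…,d_m positive integers. Let U_G(A) = F⟨X⟩/T_G(A) be the relatively free G-graded algebra of A, and for each k ∈ ℕ and g ∈ G let ξ_k^{(g)} ∈ UT(d_1,…,d_m; U_G(A)) be the generic block-triangular matrix whose (i,j) entry in the upper-triangular block region is the class of a distinct variable x_{ij,k}^{(g)} of degree g and whose entries below the block diagonal are 0. Then the subalgebra generated by all the ξ_k^{(g)} is isomorphic, as a G-graded algebra, to F⟨X⟩/T_G(UT(d_1,…,d_m;A)), the relatively free graded algebra of UT(d_1,…,d_m;A). -/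
/-!
Substituting the generic matrices `ξ_k^{(g)}` is the same as substituting the generic matrices
over `F⟨X⟩` itself (entries `x_{ij,k}^{(g)}` above the block diagonal, `0` below) and then reducing
every entry modulo `T_G(A)`. Every graded substitution `φ` into `UT(d₁,…,dₘ; A)` factors through
the generic one, via the graded substitution into `A` sending `x_{ij,k}^{(g)}` to the `(i,j)`
entry of `φ(x_k^{(g)})`. Hence `f` is a graded identity of `UT(d₁,…,dₘ; A)` iff every entry of its
generic image lies in `T_G(A)`, i.e. iff `f` lies in the kernel of the substitution
`x_k^{(g)} ↦ ξ_k^{(g)}`, whose image is the subalgebra generated by the `ξ_k^{(g)}`.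
-/

noncomputable section

/-- The set of `G`-graded polynomial identities of a `G`-graded algebra `A`. -/
def gradedIdentities (F : Type*) [Field F] (G : Type*) [Group G]
    {A : Type*} [Ring A] [Algebra F A] (𝒜 : G → Submodule F A) :
    Set (FreeAlgebra F (ℕ × G)) :=
  {f | ∀ φ : FreeAlgebra F (ℕ × G) →ₐ[F] A,
    (∀ p : ℕ × G, φ (FreeAlgebra.ι F p) ∈ 𝒜 p.2) → φ f = 0}

/-- `blockOf d i` is the index of the block containing the row/column index `i`. -/
def blockOf (d : ℕ → ℕ) (i : ℕ) : ℕ :=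
  sInf {t | i < ∑ s ∈ Finset.range (t + 1), d s}

variable (F : Type*) [Field F] [CharZero F] (G : Type*) [Group G]
  {A : Type*} [Ring A] [Algebra F A] (𝒜 : G → Submodule F A) {m : ℕ} (d : Fin m → ℕ)

/-- The block function associated with the block sizes `d : Fin m → ℕ`. -/
def blk (i : ℕ) : ℕ := blockOf (fun s => if h : s < m then d ⟨s, h⟩ else 0) i

/-- The set of `G`-graded polynomial identities of `UT(d₁,…,dₘ; A)`, the algebra of
block upper-triangular matrices over `A` graded entrywise: graded polynomials
vanishing under every substitution of homogeneous block upper-triangular matrices of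
the appropriate degrees. -/
def gradedIdentitiesUT : Set (FreeAlgebra F (ℕ × G)) :=
  {f | ∀ φ : FreeAlgebra F (ℕ × G) →ₐ[F] Matrix (Fin (∑ t, d t)) (Fin (∑ t, d t)) A,
    (∀ p : ℕ × G, (∀ i j, φ (FreeAlgebra.ι F p) i j ∈ 𝒜 p.2) ∧
      ∀ i j : Fin (∑ t, d t), blk d (j : ℕ) < blk d (i : ℕ) →
        φ (FreeAlgebra.ι F p) i j = 0) → φ f = 0}

/-- The relatively free `G`-graded algebra `U_G(A) = F⟨X⟩/T_G(A)` of `A`, realized as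
the quotient of the free algebra by the relation identifying elements congruent modulo
the ideal of graded identities of `A`. -/
def relFree := RingQuot (fun a b : FreeAlgebra F (ℕ × G) => a - b ∈ gradedIdentities F G 𝒜)

instance : Ring (relFree F G 𝒜) := by unfold relFree; infer_instance
instance : Algebra F (relFree F G 𝒜) := by unfold relFree; infer_instance

/-- The generic block upper-triangular matrix `ξ_k^{(g)}` with entries from `U_G(A)`:
its `(i,j)` entry is the class of the distinct variable `x_{ij,k}^{(g)}` of degree `g`
when `(i,j)` is in the upper block-triangular region, and `0` below the block diagonal.
(The triple `(i,j,k)` is encoded into a single natural number via `Nat.pair`.) -/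
def genericUT (k : ℕ) (g : G) :
    Matrix (Fin (∑ t, d t)) (Fin (∑ t, d t)) (relFree F G 𝒜) :=
  fun i j =>
    if blk d (j : ℕ) < blk d (i : ℕ) then 0
    else RingQuot.mkAlgHom F _ (FreeAlgebra.ι F (Nat.pair (Nat.pair i j) k, g))

open FreeAlgebra

section RingQuot

variable {R S T : Type*} [CommRing R] [Ring S] [Algebra R S] [Ring T] [Algebra R T]

theorem RingQuot.mkAlgHom_eq_zero_iff_of_forall {I : Set S} {P : (S →ₐ[R] T) → Prop}
    (hI : ∀ f, f ∈ I ↔ ∀ φ, P φ → φ f = 0) (f : S) :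
    RingQuot.mkAlgHom R (fun a b : S => a - b ∈ I) f = 0 ↔ f ∈ I := by
  refine ⟨fun hf => (hI f).2 fun φ hφ => ?_, fun hf => ?_⟩
  · have hφS : ∀ ⦃a b : S⦄, a - b ∈ I → φ a = φ b := fun a b hab =>
      sub_eq_zero.1 (map_sub φ a b ▸ (hI _).1 hab φ hφ)
    rw [← RingQuot.liftAlgHom_mkAlgHom_apply R φ hφS f, hf, map_zero]
  · rw [RingQuot.mkAlgHom_rel R (show f - 0 ∈ I by rwa [sub_zero]), map_zero]

/-- The first isomorphism theorem, for a quotient presented as a `RingQuot`. -/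
def RingQuot.algEquivRangeOfMemIff (Φ : S →ₐ[R] T) {I : Set S}
    (hI : ∀ f, f ∈ I ↔ Φ f = 0) : RingQuot (fun a b : S => a - b ∈ I) ≃ₐ[R] Φ.range := by
  have hΦS : ∀ ⦃a b : S⦄, a - b ∈ I → Φ a = Φ b := fun a b hab =>
    sub_eq_zero.1 (map_sub Φ a b ▸ (hI _).1 hab)
  let Φ' := RingQuot.liftAlgHom R ⟨Φ, hΦS⟩
  have hΦ' (a : S) : Φ' (RingQuot.mkAlgHom R _ a) = Φ a :=
    RingQuot.liftAlgHom_mkAlgHom_apply R Φ hΦS a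
  have hinj : Function.Injective Φ' := by
    refine (injective_iff_map_eq_zero Φ').2 fun x hx => ?_
    obtain ⟨a, rfl⟩ := RingQuot.mkAlgHom_surjective R _ x
    rw [hΦ'] at hx
    exact (RingQuot.mkAlgHom_eq_zero_iff_of_forall (P := (· = Φ))
      (fun f => (hI f).trans ⟨fun h _ hφ => hφ ▸ h, fun h => h Φ rfl⟩) a).2 ((hI a).2 hx)
  have hrange : Φ'.range = Φ.range := by
    ext y
    refine ⟨?_, fun ⟨a, ha⟩ => ⟨RingQuot.mkAlgHom R _ a, (hΦ' a).trans ha⟩⟩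
    rintro ⟨x, rfl⟩
    obtain ⟨a, rfl⟩ := RingQuot.mkAlgHom_surjective R _ x
    exact ⟨a, (hΦ' a).symm⟩
  exact (AlgEquiv.ofInjective Φ' hinj).trans (Subalgebra.equivOfEq _ _ hrange)

end RingQuot

section GenericMatrix

variable (R : Type*) [CommRing R] {Γ B : Type*} [Ring B] [Algebra R B]
  (ℬ : Γ → Submodule R B) {n : ℕ} (Z : Fin n → Fin n → Prop) [DecidableRel Z]

/-- The variable `x_k^{(g)}` is `ι R (k, g)`; it must be sent to an element of degree `g`. -/
def IsGradedSubst (φ : FreeAlgebra R (ℕ × Γ) →ₐ[R] B) : Prop :=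
  ∀ p : ℕ × Γ, φ (ι R p) ∈ ℬ p.2

def IsGradedPatternSubst (φ : FreeAlgebra R (ℕ × Γ) →ₐ[R] Matrix (Fin n) (Fin n) B) : Prop :=
  ∀ p : ℕ × Γ, (∀ i j, φ (ι R p) i j ∈ ℬ p.2) ∧ ∀ i j, Z i j → φ (ι R p) i j = 0

/-- The variable `x_{ij,k}^{(g)}` is `x_{⟨⟨i,j⟩,k⟩}^{(g)}`, as in `genericUT`. -/
def genericMatrix (p : ℕ × Γ) : Matrix (Fin n) (Fin n) (FreeAlgebra R (ℕ × Γ)) :=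
  Matrix.of fun i j => if Z i j then 0 else ι R (Nat.pair (Nat.pair i j) p.1, p.2)

def genericSubst : FreeAlgebra R (ℕ × Γ) →ₐ[R] Matrix (Fin n) (Fin n) (FreeAlgebra R (ℕ × Γ)) :=
  FreeAlgebra.lift R (genericMatrix R Z)

variable {R ℬ Z}

theorem mapMatrix_comp_genericSubst_ι (ψ : FreeAlgebra R (ℕ × Γ) →ₐ[R] B) (p : ℕ × Γ) :
    ((AlgHom.mapMatrix ψ).comp (genericSubst R Z)) (ι R p) = (genericMatrix R Z p).map ψ := by
  rw [AlgHom.comp_apply, genericSubst, lift_ι_apply, AlgHom.mapMatrix_apply]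

theorem IsGradedSubst.isGradedPatternSubst_mapMatrix_comp {ψ : FreeAlgebra R (ℕ × Γ) →ₐ[R] B}
    (hψ : IsGradedSubst R ℬ ψ) :
    IsGradedPatternSubst R ℬ Z ((AlgHom.mapMatrix ψ).comp (genericSubst R Z)) := by
  intro p
  simp only [mapMatrix_comp_genericSubst_ι, Matrix.map_apply, genericMatrix, Matrix.of_apply]
  refine ⟨fun i j => ?_, fun i j hij => by rw [if_pos hij, map_zero]⟩
  split_ifs
  · rw [map_zero]; exact zero_mem _
  · exact hψ (Nat.pair (Nat.pair i j) p.1, p.2)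

theorem IsGradedPatternSubst.exists_eq_mapMatrix_comp
    {φ : FreeAlgebra R (ℕ × Γ) →ₐ[R] Matrix (Fin n) (Fin n) B}
    (hφ : IsGradedPatternSubst R ℬ Z φ) :
    ∃ ψ, IsGradedSubst R ℬ ψ ∧ (AlgHom.mapMatrix ψ).comp (genericSubst R Z) = φ := by
  let entry (p : ℕ × Γ) : B :=
    if h : p.1.unpair.1.unpair.1 < n ∧ p.1.unpair.1.unpair.2 < n then
      φ (ι R (p.1.unpair.2, p.2)) ⟨_, h.1⟩ ⟨_, h.2⟩ else 0
  refine ⟨FreeAlgebra.lift R entry, fun p => ?_, FreeAlgebra.hom_ext (funext fun p => ?_)⟩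
  · rw [lift_ι_apply]
    unfold entry
    split
    · exact (hφ (p.1.unpair.2, p.2)).1 _ _
    · exact zero_mem _
  · ext i j
    simp only [Function.comp_apply, mapMatrix_comp_genericSubst_ι, Matrix.map_apply,
      genericMatrix, Matrix.of_apply]
    split_ifs with hij
    · rw [map_zero, (hφ p).2 i j hij]
    · simp [entry]

theorem forall_isGradedPatternSubst_eq_zero_iff (f : FreeAlgebra R (ℕ × Γ)) :
    (∀ φ, IsGradedPatternSubst R ℬ Z φ → φ f = 0) ↔
      ∀ i j, ∀ ψ, IsGradedSubst R ℬ ψ → ψ (genericSubst R Z f i j) = 0 := by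
  constructor
  · intro hf i j ψ hψ
    simpa using congr_fun₂ (hf _ hψ.isGradedPatternSubst_mapMatrix_comp) i j
  · intro hf φ hφ
    obtain ⟨ψ, hψ, rfl⟩ := hφ.exists_eq_mapMatrix_comp
    ext i j
    exact hf i j ψ hψ

theorem map_genericSubst_eq_zero_iff {Q : Type*} [Ring Q] [Algebra R Q]
    (π : FreeAlgebra R (ℕ × Γ) →ₐ[R] Q) (hπ : ∀ g, π g = 0 ↔ ∀ ψ, IsGradedSubst R ℬ ψ → ψ g = 0)
    (f : FreeAlgebra R (ℕ × Γ)) :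
    (genericSubst R Z f).map π = 0 ↔ ∀ φ, IsGradedPatternSubst R ℬ Z φ → φ f = 0 := by
  rw [forall_isGradedPatternSubst_eq_zero_iff, ← Matrix.ext_iff]
  exact forall₂_congr fun i j => hπ _

end GenericMatrix

section BlockTriangular

variable (F : Type*) [Field F] (G : Type*) [Group G] {A : Type*} [Ring A] [Algebra F A]
  (𝒜 : G → Submodule F A) {m : ℕ} (d : Fin m → ℕ)

def relFree.mkAlgHom : FreeAlgebra F (ℕ × G) →ₐ[F] relFree F G 𝒜 :=
  RingQuot.mkAlgHom F _

theorem relFree.mkAlgHom_eq_zero_iff (f : FreeAlgebra F (ℕ × G)) :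
    relFree.mkAlgHom F G 𝒜 f = 0 ↔ ∀ ψ, IsGradedSubst F 𝒜 ψ → ψ f = 0 :=
  RingQuot.mkAlgHom_eq_zero_iff_of_forall (fun _ => Iff.rfl) f

theorem genericUT_apply (k : ℕ) (g : G) (i j : Fin (∑ t, d t)) :
    genericUT F G 𝒜 d k g i j = if blk d j < blk d i then 0
      else relFree.mkAlgHom F G 𝒜 (ι F (Nat.pair (Nat.pair i j) k, g)) :=
  rfl

theorem lift_genericUT_eq_mapMatrix_comp_genericSubst :
    FreeAlgebra.lift F (fun p : ℕ × G => genericUT F G 𝒜 d p.1 p.2) =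
      (AlgHom.mapMatrix (relFree.mkAlgHom F G 𝒜)).comp
        (genericSubst F fun i j : Fin (∑ t, d t) => blk d j < blk d i) := by
  refine FreeAlgebra.hom_ext (funext fun p => ?_)
  rw [Function.comp_apply, Function.comp_apply, lift_ι_apply, mapMatrix_comp_genericSubst_ι]
  ext i j
  rw [Matrix.map_apply, genericUT_apply, genericMatrix, Matrix.of_apply,
    apply_ite (relFree.mkAlgHom F G 𝒜), map_zero]

theorem lift_genericUT_eq_zero_iff (f : FreeAlgebra F (ℕ × G)) :
    FreeAlgebra.lift F (fun p : ℕ × G => genericUT F G 𝒜 d p.1 p.2) f = 0 ↔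
      f ∈ gradedIdentitiesUT F G 𝒜 d := by
  rw [lift_genericUT_eq_mapMatrix_comp_genericSubst]
  exact map_genericSubst_eq_zero_iff _ (relFree.mkAlgHom_eq_zero_iff F G 𝒜) f

end BlockTriangular

theorem generic_model_relatively_free :
    letI Φ : FreeAlgebra F (ℕ × G) →ₐ[F]
        Matrix (Fin (∑ t, d t)) (Fin (∑ t, d t)) (relFree F G 𝒜) :=
      FreeAlgebra.lift F (fun p : ℕ × G => genericUT F G 𝒜 d p.1 p.2)
    {f | Φ f = 0} = gradedIdentitiesUT F G 𝒜 d ∧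
      Nonempty ((Algebra.adjoin F
          (Set.range fun p : ℕ × G => genericUT F G 𝒜 d p.1 p.2)) ≃ₐ[F]
        RingQuot (fun a b : FreeAlgebra F (ℕ × G) =>
          a - b ∈ gradedIdentitiesUT F G 𝒜 d)) :=
  ⟨Set.ext (lift_genericUT_eq_zero_iff F G 𝒜 d),
    ⟨(Subalgebra.equivOfEq _ _ (Algebra.adjoin_range_eq_range_freeAlgebra_lift F _ _)).trans
      (RingQuot.algEquivRangeOfMemIff _ fun f => (lift_genericUT_eq_zero_iff F G 𝒜 d f).symm).symm⟩⟩
end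
end

section
/- In the free Z/2-graded algebra modulo the T-ideal generated by [x_1,x_2,x_3] (the relatively free algebra of E with the deg(·)_∞ grading), the elements y_{i_1}⋯y_{i_n} z_{j_1}⋯z_{j_m} [x_{l_1},x_{l_2}]⋯[x_{l_{2s-1}},x_{l_{2s}}] with n,m,s ≥ 0, i_1 ≤ ⋯ ≤ i_n, j_1 ≤ ⋯ ≤ j_m, l_1 < ⋯ < l_{2s}, span the whole algebra. -/
/-- The spanning set: the elements
`y_{i₁}⋯y_{iₙ} z_{j₁}⋯z_{jₘ} [x_{l₁},x_{l₂}]⋯[x_{l_{2s-1}},x_{l_{2s}}]`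
of the free `ℤ/2`-graded algebra on even variables `y_i = x_{(i,0)}` and odd variables
`z_j = x_{(j,1)}`, with `i₁ ≤ ⋯ ≤ iₙ`, `j₁ ≤ ⋯ ≤ jₘ` and `l₁ < ⋯ < l_{2s}` (the
variables being linearly ordered by `(n, g) ↦ 2n + g`). -/
def spanningSet (F : Type*) [Field F] : Set (FreeAlgebra F (ℕ × ZMod 2)) :=
  {x | ∃ (ys zs : List ℕ) (cs : List ((ℕ × ZMod 2) × (ℕ × ZMod 2))),
    ys.Chain' (· ≤ ·) ∧ zs.Chain' (· ≤ ·) ∧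
    (cs.flatMap fun pq => [pq.1, pq.2]).Chain'
      (fun p q => 2 * p.1 + p.2.val < 2 * q.1 + q.2.val) ∧
    x = (ys.map fun i => FreeAlgebra.ι F (i, (0 : ZMod 2))).prod *
        (zs.map fun j => FreeAlgebra.ι F (j, (1 : ZMod 2))).prod *
        (cs.map fun pq => FreeAlgebra.ι F pq.1 * FreeAlgebra.ι F pq.2 -
          FreeAlgebra.ι F pq.2 * FreeAlgebra.ι F pq.1).prod}

/-- The set of generators of the `T_{ℤ/2}`-ideal generated by the triple commutator
`[x₁,x₂,x₃]`: all elements `u·[[a,b],c]·v`. (Since the triple commutator is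
multilinear, its consequences under graded substitutions form the two-sided ideal
generated by all triple commutators of elements of the free graded algebra, i.e. the
`F`-span of this set.) -/
def tripleCommIdealSet (F : Type*) [Field F] : Set (FreeAlgebra F (ℕ × ZMod 2)) :=
  {x | ∃ u a b c v : FreeAlgebra F (ℕ × ZMod 2),
    x = u * ((a * b - b * a) * c - c * (a * b - b * a)) * v}

/-!
Modulo the ideal, every commutator is central. Hence `⁅a, b⁆ * ⁅c, d⁆ = -⁅a, c⁆ * ⁅b, d⁆`
(expand `⁅⁅a, b * c⁆, d⁆ = 0`), so a product of commutators of variables is an alternating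
function of its `2s` entries: it vanishes when a variable repeats and otherwise equals, up to
sign, the product with strictly increasing entries. Swapping two adjacent variables of a word
changes it by a shorter word times a commutator, so by induction on the length every word times a
product of commutators is a combination of sorted words times sorted commutator products. The
argument only uses that commutators are central, so it runs in the quotient by the ideal.
-/

open Submodule

theorem List.exists_perm_pairwise_le_comp {ι κ : Type*} [LinearOrder κ] (f : ι → κ)
    (l : List ι) : ∃ s : List ι, s.Perm l ∧ s.Pairwise (f · ≤ f ·) :=
  ⟨l.mergeSort (f · ≤ f ·), l.mergeSort_perm _, by
    simpa using List.pairwise_mergeSort (le := fun a b => decide (f a ≤ f b))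
      (fun _ _ _ h₁ h₂ => by simp only [decide_eq_true_eq] at *; exact h₁.trans h₂)
      (fun a b => by simpa using le_total (f a) (f b)) l⟩

section CentralCommutators

variable {R ι : Type*} [Ring R]

/-- Lists of odd length give `0`; with this convention the sign rule `lieProd_perm` holds for
all lists. -/
def lieProd (x : ι → R) : List ι → R
  | [] => 1
  | [_] => 0
  | a :: b :: l => ⁅x a, x b⁆ * lieProd x l

theorem map_lieProd {R' Φ : Type*} [Ring R'] [FunLike Φ R R'] [RingHomClass Φ R R'] (φ : Φ)
    (x : ι → R) : ∀ l, φ (lieProd x l) = lieProd (φ ∘ x) l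
  | [] => map_one φ
  | [_] => map_zero φ
  | a :: b :: l => by simp [lieProd, Ring.lie_def, map_lieProd φ x l]

theorem map_lie_lie {R' Φ : Type*} [Ring R'] [FunLike Φ R R'] [RingHomClass Φ R R'] (φ : Φ)
    (a b c : R) : φ ⁅⁅a, b⁆, c⁆ = ⁅⁅φ a, φ b⁆, φ c⁆ := by
  simp [Ring.lie_def]

theorem lieProd_eq_zero_or_exists_eq_flatMap (x : ι → R) :
    ∀ t : List ι, lieProd x t = 0 ∨
      ∃ cs : List (ι × ι), t = cs.flatMap (fun pq => [pq.1, pq.2]) ∧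
        lieProd x t = (cs.map fun pq => ⁅x pq.1, x pq.2⁆).prod
  | [] => .inr ⟨[], rfl, rfl⟩
  | [_] => .inl rfl
  | a :: b :: t => by
    rcases lieProd_eq_zero_or_exists_eq_flatMap x t with h | ⟨cs, rfl, h⟩
    · exact .inl (by simp [lieProd, h])
    · exact .inr ⟨(a, b) :: cs, rfl, by simp [lieProd, h]⟩

theorem commute_lie_of_lie_lie_eq_zero (hR : ∀ a b c : R, ⁅⁅a, b⁆, c⁆ = 0) (a b c : R) :
    Commute ⁅a, b⁆ c := by
  have h := hR a b c
  rwa [Ring.lie_def, sub_eq_zero] at h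

theorem lie_mul_lie_of_lie_lie_eq_zero (hR : ∀ a b c : R, ⁅⁅a, b⁆, c⁆ = 0) (a b c d : R) :
    ⁅a, b⁆ * ⁅c, d⁆ = -(⁅a, c⁆ * ⁅b, d⁆) := by
  have key : ⁅a, b⁆ * ⁅c, d⁆ + ⁅a, c⁆ * ⁅b, d⁆ =
      ⁅⁅a, b * c⁆, d⁆ - ⁅⁅a, b⁆, d⁆ * c - d * ⁅⁅a, c⁆, b⁆ + ⁅⁅a, c⁆, b⁆ * d
        - ⁅⁅a, c⁆, d⁆ * b := by
    simp only [Ring.lie_def]; noncomm_ring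
  simpa [hR, eq_neg_iff_add_eq_zero] using key

theorem lieProd_append_swap (hR : ∀ a b c : R, ⁅⁅a, b⁆, c⁆ = 0) (x : ι → R) (a b : ι)
    (l : List ι) : ∀ u : List ι, lieProd x (u ++ a :: b :: l) = -lieProd x (u ++ b :: a :: l)
  | [] => by simp only [List.nil_append, lieProd, Ring.lie_def]; noncomm_ring
  | [c] => by
    cases l with
    | nil => simp [lieProd]
    | cons d l =>
      simp only [List.singleton_append, lieProd, ← mul_assoc]
      rw [lie_mul_lie_of_lie_lie_eq_zero hR, neg_mul]
  | c :: d :: u => by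
    simp [lieProd, lieProd_append_swap hR x a b l u]

/-- The prefix `u` carries the induction through the `cons` case, which shifts the pairing. -/
theorem lieProd_perm (hR : ∀ a b c : R, ⁅⁅a, b⁆, c⁆ = 0) (x : ι → R) {l₁ l₂ : List ι}
    (h : l₁.Perm l₂) (u : List ι) :
    lieProd x (u ++ l₁) = lieProd x (u ++ l₂) ∨ lieProd x (u ++ l₁) = -lieProd x (u ++ l₂) := by
  induction h generalizing u with
  | nil => exact .inl rfl
  | cons a _ ih => simpa using ih (u ++ [a])
  | swap a b l => exact .inr (lieProd_append_swap hR x b a l u)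
  | trans _ _ ih₁₂ ih₂₃ =>
    rcases ih₁₂ u with h | h <;> rcases ih₂₃ u with h' | h' <;> simp [h, h']

theorem lieProd_eq_zero_of_not_nodup (hR : ∀ a b c : R, ⁅⁅a, b⁆, c⁆ = 0) (x : ι → R)
    {l : List ι} (hl : ¬l.Nodup) : lieProd x l = 0 := by
  obtain ⟨a, ha⟩ : ∃ a, List.Duplicate a l := by
    simpa [List.nodup_iff_forall_not_duplicate] using hl
  obtain ⟨r, hr⟩ := (List.duplicate_iff_sublist.1 ha).exists_perm_append
  rcases lieProd_perm hR x hr [] with h | h <;> simpa [lieProd, Ring.lie_def] using h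

variable {K : Type*} [CommRing K] [Algebra K R]

theorem lieProd_mem_span_pairwise (hR : ∀ a b c : R, ⁅⁅a, b⁆, c⁆ = 0) {κ : Type*}
    [LinearOrder κ] (x : ι → R) {f : ι → κ} (hf : Function.Injective f) (l : List ι) :
    lieProd x l ∈ span K {r | ∃ t : List ι, t.Pairwise (f · < f ·) ∧ r = lieProd x t} := by
  by_cases hl : l.Nodup
  · obtain ⟨s, hsl, hs⟩ := List.exists_perm_pairwise_le_comp f l
    have hs_lt : s.Pairwise (f · < f ·) :=
      (hs.and (hsl.nodup_iff.2 hl)).imp fun h => h.1.lt_of_ne (hf.ne h.2)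
    have hmem : lieProd x s ∈
        span K {r | ∃ t : List ι, t.Pairwise (f · < f ·) ∧ r = lieProd x t} :=
      subset_span ⟨s, hs_lt, rfl⟩
    rcases lieProd_perm hR x hsl.symm [] with h | h <;>
      simp only [List.nil_append] at h <;> rw [h]
    · exact hmem
    · exact neg_mem hmem
  · simp [lieProd_eq_zero_of_not_nodup hR x hl]

theorem prod_map_sub_mem_span_of_perm (hR : ∀ a b c : R, ⁅⁅a, b⁆, c⁆ = 0) (x : ι → R)
    {l₁ l₂ : List ι} (h : l₁.Perm l₂) :
    (l₁.map x).prod - (l₂.map x).prod ∈ span K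
      {r | ∃ (u : List ι) (a b : ι), u.length < l₁.length ∧ r = (u.map x).prod * ⁅x a, x b⁆} := by
  induction h with
  | nil => simp
  | cons c _ ih =>
    simp only [List.map_cons, List.prod_cons, ← mul_sub]
    refine (map_span_le (LinearMap.mulLeft K (x c)) _ _).2 ?_ (mem_map_of_mem ih)
    rintro _ ⟨u, a, b, hu, rfl⟩
    exact subset_span ⟨c :: u, a, b, by simpa using hu, by simp [mul_assoc]⟩
  | swap a b l =>
    refine subset_span ⟨l, b, a, by simp, ?_⟩
    rw [← (commute_lie_of_lie_lie_eq_zero hR _ _ _).eq]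
    simp only [List.map_cons, List.prod_cons, Ring.lie_def]
    noncomm_ring
  | trans h₁₂ _ ih₁₂ ih₂₃ =>
    rw [← h₁₂.length_eq] at ih₂₃
    simpa using add_mem ih₁₂ ih₂₃

variable {κ κ' : Type*} [LinearOrder κ] [LinearOrder κ']

def sortedProducts (x : ι → R) (g : ι → κ) (f : ι → κ') : Set R :=
  {r | ∃ s t : List ι, s.Pairwise (g · ≤ g ·) ∧ t.Pairwise (f · < f ·) ∧
    r = (s.map x).prod * lieProd x t}

theorem prod_map_mul_lieProd_mem_span_sortedProducts (hR : ∀ a b c : R, ⁅⁅a, b⁆, c⁆ = 0)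
    (x : ι → R) (g : ι → κ) {f : ι → κ'} (hf : Function.Injective f) (w t : List ι) :
    (w.map x).prod * lieProd x t ∈ span K (sortedProducts x g f) := by
  induction hn : w.length using Nat.strong_induction_on generalizing w t with
  | _ n ih =>
  obtain ⟨s, hsw, hs⟩ := List.exists_perm_pairwise_le_comp g w
  have hsorted : (s.map x).prod * lieProd x t ∈ span K (sortedProducts x g f) :=
    (map_span_le (LinearMap.mulLeft K _) _ _).2
      (by rintro _ ⟨t', ht', rfl⟩; exact subset_span ⟨s, t', hs, ht', rfl⟩)
      (mem_map_of_mem (lieProd_mem_span_pairwise hR x hf t))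
  have hdiff : ((w.map x).prod - (s.map x).prod) * lieProd x t ∈
      span K (sortedProducts x g f) :=
    (map_span_le (LinearMap.mulRight K _) _ _).2
      (by
        rintro _ ⟨u, a, b, hu, rfl⟩
        simpa [lieProd, mul_assoc] using ih u.length (hn ▸ hu) u (a :: b :: t) rfl)
      (mem_map_of_mem (prod_map_sub_mem_span_of_perm hR x hsw.symm))
  simpa [sub_mul] using add_mem hsorted hdiff

theorem span_sortedProducts_eq_top (hR : ∀ a b c : R, ⁅⁅a, b⁆, c⁆ = 0) {x : ι → R}
    (hx : Algebra.adjoin K (Set.range x) = ⊤) (g : ι → κ) {f : ι → κ'}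
    (hf : Function.Injective f) : span K (sortedProducts x g f) = ⊤ := by
  have hwords : ∀ r ∈ Submonoid.closure (Set.range x), ∃ w : List ι, r = (w.map x).prod := by
    intro r hr
    induction hr using Submonoid.closure_induction with
    | mem _ h => obtain ⟨i, rfl⟩ := h; exact ⟨[i], by simp⟩
    | one => exact ⟨[], rfl⟩
    | mul _ _ _ _ h₁ h₂ =>
      obtain ⟨w₁, rfl⟩ := h₁
      obtain ⟨w₂, rfl⟩ := h₂
      exact ⟨w₁ ++ w₂, by simp⟩
  rw [eq_top_iff, ← Algebra.toSubmodule_eq_top.2 hx, Algebra.adjoin_eq_span, span_le]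
  intro r hr
  obtain ⟨w, rfl⟩ := hwords r hr
  simpa [lieProd] using prod_map_mul_lieProd_mem_span_sortedProducts hR x g hf w []

end CentralCommutators

theorem span_sortedProducts_sup_eq_top {K A ι κ κ' : Type*} [CommRing K] [Ring A] [Algebra K A]
    [LinearOrder κ] [LinearOrder κ'] {x : ι → A} (hx : Algebra.adjoin K (Set.range x) = ⊤)
    (I : Ideal A) [I.IsTwoSided] (hI : ∀ a b c : A, ⁅⁅a, b⁆, c⁆ ∈ I) (g : ι → κ) {f : ι → κ'}
    (hf : Function.Injective f) :
    span K (sortedProducts x g f) ⊔ I.restrictScalars K = ⊤ := by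
  set π := Ideal.Quotient.mkₐ K I
  have hπ : Function.Surjective π := Ideal.Quotient.mkₐ_surjective K I
  have hQ : ∀ a b c : A ⧸ I, ⁅⁅a, b⁆, c⁆ = 0 := by
    intro a b c
    obtain ⟨a, rfl⟩ := hπ a
    obtain ⟨b, rfl⟩ := hπ b
    obtain ⟨c, rfl⟩ := hπ c
    rw [← map_lie_lie]
    exact Ideal.Quotient.eq_zero_iff_mem.2 (hI a b c)
  have hxQ : Algebra.adjoin K (Set.range (π ∘ x)) = ⊤ := by
    rw [Set.range_comp, Algebra.adjoin_image, hx, Algebra.map_top, AlgHom.range_eq_top]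
    exact hπ
  have himage : sortedProducts (π ∘ x) g f ⊆ π '' sortedProducts x g f := by
    rintro _ ⟨s, t, hs, ht, rfl⟩
    exact ⟨_, ⟨s, t, hs, ht, rfl⟩, by simp [map_list_prod, map_lieProd]⟩
  rw [eq_top_iff]
  intro z _
  obtain ⟨m, hm, hmz⟩ : π z ∈ (span K (sortedProducts x g f)).map π.toLinearMap := by
    rw [← span_image]
    exact span_mono himage (span_sortedProducts_eq_top hQ hxQ g hf ▸ mem_top)
  have hker : z - m ∈ I := Ideal.Quotient.eq.1 hmz.symm
  exact mem_sup.2 ⟨m, hm, z - m, hker, add_sub_cancel _ _⟩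

theorem Ideal.isTwoSided_span_of_mul_mem {A : Type*} [Semiring A] {s : Set A}
    (hs : ∀ x ∈ s, ∀ b, x * b ∈ s) : (Ideal.span s).IsTwoSided := by
  refine ⟨fun b hx => ?_⟩
  induction hx using Submodule.span_induction with
  | mem x hx => exact subset_span (hs x hx b)
  | zero => simp
  | add _ _ _ _ h₁ h₂ => simpa [add_mul] using add_mem h₁ h₂
  | smul a _ _ h => simpa [mul_assoc] using Ideal.mul_mem_left _ a h

theorem Ideal.restrictScalars_span_le_span {K A : Type*} [CommRing K] [Ring A] [Algebra K A]
    {s : Set A} (hs : ∀ a, ∀ x ∈ s, a * x ∈ s) :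
    (Ideal.span s).restrictScalars K ≤ Submodule.span K s := by
  intro z hz
  induction hz using Submodule.span_induction with
  | mem x hx => exact Submodule.subset_span hx
  | zero => exact zero_mem _
  | add _ _ _ _ h₁ h₂ => exact add_mem h₁ h₂
  | smul a _ _ h =>
    exact (Submodule.map_span_le (LinearMap.mulLeft K a) _ _).2
      (fun x hx => Submodule.subset_span (hs a x hx)) (Submodule.mem_map_of_mem h)

section GradedVariables

/-- The order of the variables in the monomials of `spanningSet`: the `y`'s before the `z`'s,
each by index. -/
def monomialKey (p : ℕ × ZMod 2) : ℕ ×ₗ ℕ := toLex (p.2.val, p.1)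

def commutatorKey (p : ℕ × ZMod 2) : ℕ := 2 * p.1 + p.2.val

theorem commutatorKey_injective : Function.Injective commutatorKey := by
  rintro ⟨n, e⟩ ⟨m, d⟩ h
  have he := ZMod.val_lt e
  have hd := ZMod.val_lt d
  simp only [commutatorKey] at h
  obtain ⟨rfl, hv⟩ : n = m ∧ e.val = d.val := by omega
  rw [ZMod.val_injective 2 hv]

theorem exists_eq_map_append_map_of_pairwise :
    ∀ {s : List (ℕ × ZMod 2)}, s.Pairwise (monomialKey · ≤ monomialKey ·) →
      ∃ ys zs : List ℕ, ys.Pairwise (· ≤ ·) ∧ zs.Pairwise (· ≤ ·) ∧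
        s = ys.map (·, 0) ++ zs.map (·, 1)
  | [], _ => ⟨[], [], .nil, .nil, rfl⟩
  | (n, e) :: s, hs => by
    rw [List.pairwise_cons] at hs
    obtain ⟨ys, zs, hys, hzs, rfl⟩ := exists_eq_map_append_map_of_pairwise hs.2
    have hy (y : ℕ) (h : y ∈ ys) : monomialKey (n, e) ≤ monomialKey (y, 0) := hs.1 _ (by simp [h])
    have hz (z : ℕ) (h : z ∈ zs) : monomialKey (n, e) ≤ monomialKey (z, 1) := hs.1 _ (by simp [h])
    obtain rfl | rfl := (by decide : ∀ e : ZMod 2, e = 0 ∨ e = 1) e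
    all_goals simp only [monomialKey, Prod.Lex.toLex_le_toLex, ZMod.val_zero, ZMod.val_one] at hy hz
    · exact ⟨n :: ys, zs, List.pairwise_cons.2 ⟨fun y h => by simpa using hy y h, hys⟩, hzs, rfl⟩
    · obtain rfl : ys = [] := List.eq_nil_iff_forall_not_mem.2 fun y h => by simpa using hy y h
      exact ⟨[], n :: zs, .nil, List.pairwise_cons.2 ⟨fun z h => by simpa using hz z h, hzs⟩, rfl⟩

variable (F : Type*) [Field F]

theorem sortedProducts_subset_span_spanningSet :
    sortedProducts (FreeAlgebra.ι F) monomialKey commutatorKey ⊆ span F (spanningSet F) := by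
  rintro _ ⟨s, t, hs, ht, rfl⟩
  obtain ⟨ys, zs, hys, hzs, rfl⟩ := exists_eq_map_append_map_of_pairwise hs
  rcases lieProd_eq_zero_or_exists_eq_flatMap (FreeAlgebra.ι F) t with h | ⟨cs, rfl, h⟩
  · simp [h]
  · refine subset_span ⟨ys, zs, cs, hys.isChain, hzs.isChain, ht.isChain, ?_⟩
    simp [h, mul_assoc, Ring.lie_def, Function.comp_def]

theorem mul_mem_tripleCommIdealSet_right {x : FreeAlgebra F (ℕ × ZMod 2)}
    (hx : x ∈ tripleCommIdealSet F) (b : FreeAlgebra F (ℕ × ZMod 2)) :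
    x * b ∈ tripleCommIdealSet F := by
  obtain ⟨u, a, b', c, v, rfl⟩ := hx
  exact ⟨u, a, b', c, v * b, by simp only [mul_assoc]⟩

theorem mul_mem_tripleCommIdealSet_left (a : FreeAlgebra F (ℕ × ZMod 2))
    {x : FreeAlgebra F (ℕ × ZMod 2)} (hx : x ∈ tripleCommIdealSet F) :
    a * x ∈ tripleCommIdealSet F := by
  obtain ⟨u, a', b, c, v, rfl⟩ := hx
  exact ⟨a * u, a', b, c, v, by simp only [mul_assoc]⟩

instance : (Ideal.span (tripleCommIdealSet F)).IsTwoSided :=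
  Ideal.isTwoSided_span_of_mul_mem fun _ hx b => mul_mem_tripleCommIdealSet_right F hx b

theorem lie_lie_mem_tripleCommIdealSet (a b c : FreeAlgebra F (ℕ × ZMod 2)) :
    ⁅⁅a, b⁆, c⁆ ∈ tripleCommIdealSet F :=
  ⟨1, a, b, c, 1, by simp [Ring.lie_def]⟩

end GradedVariables

theorem spanning_relatively_free_grassmann_inf_general (F : Type*) [Field F] :
    Submodule.span F (spanningSet F ∪ tripleCommIdealSet F) = ⊤ := by
  have hsup := span_sortedProducts_sup_eq_top (FreeAlgebra.adjoin_range_ι F _)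
    (Ideal.span (tripleCommIdealSet F))
    (fun a b c => Ideal.subset_span (lie_lie_mem_tripleCommIdealSet F a b c))
    monomialKey commutatorKey_injective
  refine eq_top_iff.2 (hsup.ge.trans (sup_le ?_ ?_))
  · exact span_le.2 ((sortedProducts_subset_span_spanningSet F).trans
      (span_mono Set.subset_union_left))
  · exact (Ideal.restrictScalars_span_le_span
      fun a _ hx => mul_mem_tripleCommIdealSet_left F a hx).trans (span_mono Set.subset_union_right)

/-- In the relatively free algebra of the Grassmann algebra with the `deg(·)_∞`
grading, i.e. the free `ℤ/2`-graded algebra modulo the `T_{ℤ/2}`-ideal generated by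
`[x₁,x₂,x₃]`, the elements
`y_{i₁}⋯y_{iₙ} z_{j₁}⋯z_{jₘ} [x_{l₁},x_{l₂}]⋯[x_{l_{2s-1}},x_{l_{2s}}]`
(with weakly increasing `i`'s and `j`'s and strictly increasing `l`'s) span the whole
algebra: together with the ideal they span the free graded algebra over `F`. -/
theorem spanning_relatively_free_grassmann_inf (F : Type*) [Field F] [CharZero F] :
    Submodule.span F (spanningSet F ∪ tripleCommIdealSet F) = ⊤ :=
  spanning_relatively_free_grassmann_inf_general F
end
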